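/- Upper bound version of the previous lemma: if (1-δ)L ⪯ L̃ ⪯ (1+δ)L with L, L̃ sharing the same kernel, then R(u,v) ≤ (1+δ)² · R̂(u,v) where R̂(u,v) = ‖W^{1/2} B L̃⁺(χ_u − χ_v)‖² and R(u,v) = (χ_u − χ_v)ᵀL⁺(χ_u − χ_v). -/

import Mathlib

open Matrix

def IsMoorePenrose {n : ℕ} (A P : Matrix (Fin n) (Fin n) ℝ) : Prop :=
  A * P * A = A ∧ P * A * P = P ∧ (A * P)ᵀ = A * P ∧ (P * A)ᵀ = P * A

/-!
Put `χ = χ_u - χ_v`, `z = L⁺χ`, `y = L̃⁺χ`, so that `R = χ ⬝ z = zᵀ L z ≥ 0` and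
`R̂ = yᵀ L y`.
Since `χ` is orthogonal to the constants, which span `ker L̃ = ker L`, we have `L̃ y = χ`, hence
`R = zᵀ L̃ y`. Cauchy–Schwarz for the semidefinite form `L̃` and `L̃ ⪯ (1+δ) L` then give
`R² ≤ (zᵀ L̃ z)(yᵀ L̃ y) ≤ (1+δ) R · (1+δ) R̂`.
-/

section QuadraticForm

lemma Matrix.PosSemidef.transpose_eq {ι : Type*} {M : Matrix ι ι ℝ} (hM : M.PosSemidef) :
    Mᵀ = M :=
  (conjTranspose_eq_transpose_of_trivial M).symm.trans hM.1

variable {ι κ : Type*} [Fintype ι] [Fintype κ]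

lemma Matrix.dotProduct_mulVec_comm_of_transpose_eq {M : Matrix ι ι ℝ} (hM : Mᵀ = M)
    (x y : ι → ℝ) : x ⬝ᵥ M *ᵥ y = y ⬝ᵥ M *ᵥ x := by
  rw [dotProduct_mulVec, ← mulVec_transpose, hM, dotProduct_comm]

lemma Matrix.PosSemidef.dotProduct_mulVec_sq_le [DecidableEq ι] {M : Matrix ι ι ℝ}
    (hM : M.PosSemidef) (x y : ι → ℝ) :
    (x ⬝ᵥ M *ᵥ y) ^ 2 ≤ (x ⬝ᵥ M *ᵥ x) * (y ⬝ᵥ M *ᵥ y) := by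
  have hsymm : (toLinearMap₂' ℝ M).IsSymm := LinearMap.isSymm_def.mpr fun x y => by
    simpa only [toLinearMap₂'_apply', RingHom.id_apply] using
      dotProduct_mulVec_comm_of_transpose_eq hM.transpose_eq x y
  have hnonneg (x : ι → ℝ) : 0 ≤ toLinearMap₂' ℝ M x x := by
    simpa only [toLinearMap₂'_apply', star_trivial] using hM.dotProduct_mulVec_nonneg x
  simpa only [toLinearMap₂'_apply'] using
    LinearMap.BilinForm.apply_sq_le_of_symm (toLinearMap₂' ℝ M) hnonneg hsymm x y

lemma single_sub_single_dotProduct [DecidableEq ι] (u v : ι) (x : ι → ℝ) :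
    (Pi.single u 1 - Pi.single v 1 : ι → ℝ) ⬝ᵥ x = x u - x v := by
  simp only [sub_dotProduct, single_dotProduct, one_mul]

variable [DecidableEq κ]

lemma Matrix.posSemidef_transpose_mul_diagonal_mul {w : κ → ℝ} (hw : ∀ e, 0 ≤ w e)
    (B : Matrix κ ι ℝ) : (Bᵀ * diagonal w * B).PosSemidef := by
  simpa only [conjTranspose_eq_transpose_of_trivial] using
    (PosSemidef.diagonal (fun e => hw e)).conjTranspose_mul_mul_same B

lemma Matrix.sum_sq_sqrt_diagonal_mul_mulVec {w : κ → ℝ} (hw : ∀ e, 0 ≤ w e)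
    (B : Matrix κ ι ℝ) (y : ι → ℝ) :
    ∑ e, ((diagonal (fun e => √(w e)) * B) *ᵥ y) e ^ 2 =
      y ⬝ᵥ (Bᵀ * diagonal w * B) *ᵥ y := by
  have hquad :
      y ⬝ᵥ (Bᵀ * diagonal w * B) *ᵥ y = (B *ᵥ y) ⬝ᵥ diagonal w *ᵥ (B *ᵥ y) := by
    rw [Matrix.mul_assoc, ← mulVec_mulVec, dotProduct_mulVec, vecMul_transpose, ← mulVec_mulVec]
  rw [hquad, ← mulVec_mulVec, dotProduct]
  refine Finset.sum_congr rfl fun e _ => ?_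
  rw [mulVec_diagonal, mulVec_diagonal, mul_pow, Real.sq_sqrt (hw e)]
  ring

end QuadraticForm

namespace IsMoorePenrose

variable {n : ℕ} {A P Q : Matrix (Fin n) (Fin n) ℝ}

theorem unique (hP : IsMoorePenrose A P) (hQ : IsMoorePenrose A Q) : P = Q := by
  obtain ⟨p1, p2, p3, p4⟩ := hP
  obtain ⟨q1, q2, q3, q4⟩ := hQ
  have hAP : A * P = A * Q :=
    calc A * P = (A * Q * A * P)ᵀ := by rw [q1, p3]
      _ = (A * P)ᵀ * (A * Q)ᵀ := by rw [← transpose_mul, Matrix.mul_assoc (A * Q)]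
      _ = A * P * A * Q := by rw [p3, q3, Matrix.mul_assoc (A * P)]
      _ = A * Q := by rw [p1]
  have hPA : P * A = Q * A :=
    calc P * A = (P * (A * Q * A))ᵀ := by rw [q1, p4]
      _ = (Q * A)ᵀ * (P * A)ᵀ := by rw [← transpose_mul]; simp only [Matrix.mul_assoc]
      _ = Q * (A * P * A) := by rw [p4, q4]; simp only [Matrix.mul_assoc]
      _ = Q * A := by rw [p1]
  calc P = P * A * P := p2.symm
    _ = Q * A * Q := by rw [hPA, Matrix.mul_assoc, hAP, ← Matrix.mul_assoc]
    _ = Q := q2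

theorem transpose (hP : IsMoorePenrose A P) : IsMoorePenrose Aᵀ Pᵀ := by
  obtain ⟨p1, p2, p3, p4⟩ := hP
  refine ⟨?_, ?_, ?_, ?_⟩
  · simpa only [transpose_mul, Matrix.mul_assoc] using congrArg Matrix.transpose p1
  · simpa only [transpose_mul, Matrix.mul_assoc] using congrArg Matrix.transpose p2
  · rw [← transpose_mul, p4, p4]
  · rw [← transpose_mul, p3, p3]

theorem transpose_eq_self (hA : Aᵀ = A) (hP : IsMoorePenrose A P) : Pᵀ = P := by
  have hPt := hP.transpose
  rw [hA] at hPt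
  exact hPt.unique hP

theorem mul_comm_of_transpose_eq (hA : Aᵀ = A) (hP : IsMoorePenrose A P) : A * P = P * A := by
  rw [← hP.2.2.1, transpose_mul, hA, hP.transpose_eq_self hA]

theorem mulVec_mulVec_eq_self (hA : Aᵀ = A) (hP : IsMoorePenrose A P) {b : Fin n → ℝ}
    (hb : ∀ x, A *ᵥ x = 0 → b ⬝ᵥ x = 0) : A *ᵥ (P *ᵥ b) = b := by
  set r := b - A *ᵥ (P *ᵥ b)
  have hAr : A *ᵥ r = 0 := by
    have hAAP : A * A * P = A := by
      rw [Matrix.mul_assoc, hP.mul_comm_of_transpose_eq hA, ← Matrix.mul_assoc, hP.1]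
    rw [mulVec_sub, mulVec_mulVec, mulVec_mulVec, hAAP, sub_self]
  have hrr : r ⬝ᵥ r = 0 := by
    rw [sub_dotProduct, hb r hAr, dotProduct_comm, dotProduct_mulVec_comm_of_transpose_eq hA, hAr,
      dotProduct_zero, sub_zero]
  exact (sub_eq_zero.mp (dotProduct_self_eq_zero.mp hrr)).symm

theorem dotProduct_mulVec_mulVec (hA : Aᵀ = A) (hP : IsMoorePenrose A P) (b : Fin n → ℝ) :
    P *ᵥ b ⬝ᵥ A *ᵥ (P *ᵥ b) = b ⬝ᵥ P *ᵥ b := by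
  calc P *ᵥ b ⬝ᵥ A *ᵥ (P *ᵥ b) = b ⬝ᵥ P *ᵥ (A *ᵥ (P *ᵥ b)) := by
        rw [dotProduct_mulVec b, ← mulVec_transpose, hP.transpose_eq_self hA]
    _ = b ⬝ᵥ P *ᵥ b := by rw [mulVec_mulVec, mulVec_mulVec, hP.2.1]

end IsMoorePenrose

theorem dotProduct_pinv_le_of_le {n : ℕ} {L Lp Lt Ltp : Matrix (Fin n) (Fin n) ℝ} {c : ℝ}
    (hc : 0 ≤ c) (hL : L.PosSemidef) (hLt : Lt.PosSemidef)
    (hLp : IsMoorePenrose L Lp) (hLtp : IsMoorePenrose Lt Ltp)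
    (hle : ∀ x, x ⬝ᵥ Lt *ᵥ x ≤ c * (x ⬝ᵥ L *ᵥ x))
    {b : Fin n → ℝ} (hb : ∀ x, Lt *ᵥ x = 0 → b ⬝ᵥ x = 0) :
    b ⬝ᵥ Lp *ᵥ b ≤ c ^ 2 * (Ltp *ᵥ b ⬝ᵥ L *ᵥ (Ltp *ᵥ b)) := by
  set z := Lp *ᵥ b
  set y := Ltp *ᵥ b
  have hR : b ⬝ᵥ z = z ⬝ᵥ L *ᵥ z := (hLp.dotProduct_mulVec_mulVec hL.transpose_eq b).symm
  have hRnn : 0 ≤ b ⬝ᵥ z := hR ▸ hL.dotProduct_mulVec_nonneg z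
  have hSnn : 0 ≤ y ⬝ᵥ L *ᵥ y := hL.dotProduct_mulVec_nonneg y
  have hcross : b ⬝ᵥ z = z ⬝ᵥ Lt *ᵥ y := by
    rw [hLtp.mulVec_mulVec_eq_self hLt.transpose_eq hb, dotProduct_comm]
  have hsq : (b ⬝ᵥ z) * (b ⬝ᵥ z) ≤ (b ⬝ᵥ z) * (c ^ 2 * (y ⬝ᵥ L *ᵥ y)) :=
    calc (b ⬝ᵥ z) * (b ⬝ᵥ z) = (z ⬝ᵥ Lt *ᵥ y) ^ 2 := by rw [hcross, sq]
      _ ≤ (z ⬝ᵥ Lt *ᵥ z) * (y ⬝ᵥ Lt *ᵥ y) := hLt.dotProduct_mulVec_sq_le z y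
      _ ≤ (c * (b ⬝ᵥ z)) * (c * (y ⬝ᵥ L *ᵥ y)) :=
        mul_le_mul (hR ▸ hle z) (hle y) (hLt.dotProduct_mulVec_nonneg y) (mul_nonneg hc hRnn)
      _ = (b ⬝ᵥ z) * (c ^ 2 * (y ⬝ᵥ L *ᵥ y)) := by ring
  rcases hRnn.eq_or_lt with hR0 | hRpos
  · exact hR0 ▸ mul_nonneg (sq_nonneg c) hSnn
  · exact le_of_mul_le_mul_left hsq hRpos

theorem stmt_7_general {m n : ℕ} (B : Matrix (Fin m) (Fin n) ℝ) (w : Fin m → ℝ)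
    (hw : ∀ e, 0 < w e)
    (L Lp Lt Ltp : Matrix (Fin n) (Fin n) ℝ) (δ : ℝ)
    (hδ0 : 0 ≤ δ)
    (hL : L = Bᵀ * Matrix.diagonal w * B)
    (hconn : ∀ x : Fin n → ℝ, L.mulVec x = 0 ↔ ∃ c : ℝ, ∀ k, x k = c)
    (hLt : Lt.PosSemidef)
    (hker : ∀ x : Fin n → ℝ, Lt.mulVec x = 0 ↔ L.mulVec x = 0)
    (h₂ : ∀ x : Fin n → ℝ, x ⬝ᵥ Lt.mulVec x ≤ (1 + δ) * (x ⬝ᵥ L.mulVec x))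
    (hLp : IsMoorePenrose L Lp) (hLtp : IsMoorePenrose Lt Ltp) :
    ∀ u v : Fin n,
      (Pi.single u 1 - Pi.single v 1) ⬝ᵥ Lp.mulVec (Pi.single u 1 - Pi.single v 1) ≤
        (1 + δ) ^ 2 *
          ∑ e : Fin m,
            ((Matrix.diagonal (fun e => Real.sqrt (w e)) * B * Ltp).mulVec
              (Pi.single u 1 - Pi.single v 1) e) ^ 2 := by
  intro u v
  have hw' : ∀ e, 0 ≤ w e := fun e => (hw e).le
  have hχ (x : Fin n → ℝ) (hx : Lt *ᵥ x = 0) :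
      (Pi.single u 1 - Pi.single v 1 : Fin n → ℝ) ⬝ᵥ x = 0 := by
    obtain ⟨c, hc⟩ := (hconn x).mp ((hker x).mp hx)
    rw [single_sub_single_dotProduct, hc, hc, sub_self]
  rw [← mulVec_mulVec, sum_sq_sqrt_diagonal_mul_mulVec hw', ← hL]
  exact dotProduct_pinv_le_of_le (by linarith)
    (hL ▸ posSemidef_transpose_mul_diagonal_mul hw' B) hLt hLp hLtp h₂ hχ

/-- If `(1-δ)L ⪯ L̃ ⪯ (1+δ)L` with `L, L̃` sharing the same kernel, then
`R(u,v) ≤ (1+δ)² · R̂(u,v)` where `R̂(u,v) = ‖W^{1/2} B L̃⁺ (χ_u - χ_v)‖²`. -/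
theorem stmt_7 {m n : ℕ} (B : Matrix (Fin m) (Fin n) ℝ) (w : Fin m → ℝ)
    (hw : ∀ e, 0 < w e)
    (hB : ∀ e : Fin m, ∃ i j : Fin n, i ≠ j ∧
      (fun k => B e k) = (Pi.single i 1 - Pi.single j 1 : Fin n → ℝ))
    (L Lp Lt Ltp : Matrix (Fin n) (Fin n) ℝ) (δ : ℝ)
    (hδ0 : 0 ≤ δ) (hδ1 : δ < 1)
    (hL : L = Bᵀ * Matrix.diagonal w * B)
    (hconn : ∀ x : Fin n → ℝ, L.mulVec x = 0 ↔ ∃ c : ℝ, ∀ k, x k = c)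
    (hLt : Lt.PosSemidef)
    (hker : ∀ x : Fin n → ℝ, Lt.mulVec x = 0 ↔ L.mulVec x = 0)
    (h₁ : ∀ x : Fin n → ℝ, (1 - δ) * (x ⬝ᵥ L.mulVec x) ≤ x ⬝ᵥ Lt.mulVec x)
    (h₂ : ∀ x : Fin n → ℝ, x ⬝ᵥ Lt.mulVec x ≤ (1 + δ) * (x ⬝ᵥ L.mulVec x))
    (hLp : IsMoorePenrose L Lp) (hLtp : IsMoorePenrose Lt Ltp) :
    ∀ u v : Fin n,
      (Pi.single u 1 - Pi.single v 1) ⬝ᵥ Lp.mulVec (Pi.single u 1 - Pi.single v 1) ≤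
        (1 + δ) ^ 2 *
          ∑ e : Fin m,
            ((Matrix.diagonal (fun e => Real.sqrt (w e)) * B * Ltp).mulVec
              (Pi.single u 1 - Pi.single v 1) e) ^ 2 :=
  stmt_7_general B w hw L Lp Lt Ltp δ hδ0 hL hconn hLt hker h₂ hLp hLtp
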